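/- Let n ≥ 2 be an integer, p > 1, 0 < r0 ≤ R0, and r ∈ (0,1). Let Σ' ⊂ ℝ^{n−1} be a convex set with B_{r0}(0) ⊆ Σ' ⊆ B_{R0}(0), and write d(x') := dist(x', Σ'). Then there exist constants c > 0 and ε0 ∈ (0,1), depending only on n, p, r0, R0, and r, such that for all ε ∈ (0, ε0): ∫_{{x' ∈ ℝ^{n−1} : 0 < d(x') < r}} (ε + d(x')²)^{1−p} dx' ≥ c·ε^{(n+1)/2−p} if p > (n+1)/2; the same integral is ≥ c·|ln ε| if p = (n+1)/2; and it is ≥ c if 1 < p < (n+1)/2. -/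

import Mathlib

/-!
The collar `{0 < d < s}` contains `(1 + t) • closure Σ' \ closure Σ'` for `t = s / (2R)` when
`Σ' ⊆ B_R(0)`; since dilation by `1 + t` multiplies volume by `(1 + t)^(n-1) ≥ 1 + t`, this
shell has measure at least `t |Σ'|`, so the collar measure grows at least linearly in `s`.
The integrand is a decreasing function of `d`, so Cavalieri's principle turns this into a lower
bound by `a ∫₀ʳ (ε + s²)^(1-p) ds`, and the three regimes are read off this one-dimensional
integral: sampling at `s = √ε` gives `ε^(3/2-p) ≥ ε^((n+1)/2-p)`, comparing with `2^(1-p) / s`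
on `(√ε, r)` gives `|ln ε|` when `p ≥ 3/2`, and sampling at `s = r` gives a constant.
-/

open MeasureTheory Set Metric
open scoped Pointwise

section Comparison

variable {α : Type*} [MeasurableSpace α] {μ : Measure α} {d : α → ℝ} {φ : ℝ → ℝ} {a r : ℝ}

/-- By the layer cake formula it suffices to compare superlevel sets: each superlevel set of `φ`
on `(0, r)` is an interval `(0, σ)` or `(0, σ]`, and its preimage under `d` contains
`{0 < d < σ}`. -/
theorem ofReal_mul_lintegral_Ioo_le_setLIntegral_comp (hd : Measurable d) (hφ : Measurable φ)
    (hφa : AntitoneOn φ (Ioo 0 r)) (hφ0 : ∀ s ∈ Ioo 0 r, 0 ≤ φ s)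
    (hμ : ∀ s ∈ Ioc 0 r, ENNReal.ofReal (a * s) ≤ μ {x | 0 < d x ∧ d x < s}) :
    ENNReal.ofReal a * ∫⁻ s in Ioo 0 r, ENNReal.ofReal (φ s) ≤
      ∫⁻ x in {x | 0 < d x ∧ d x < r}, ENNReal.ofReal (φ (d x)) ∂μ := by
  have hA : MeasurableSet {x | 0 < d x ∧ d x < r} := hd measurableSet_Ioo
  rw [lintegral_eq_lintegral_meas_lt _ ((ae_restrict_iff' measurableSet_Ioo).2
      (.of_forall hφ0)) hφ.aemeasurable,
    lintegral_eq_lintegral_meas_lt _ ((ae_restrict_iff' hA).2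
      (.of_forall fun x hx => hφ0 _ hx)) (hφ.comp hd).aemeasurable,
    ← lintegral_const_mul' _ _ ENNReal.ofReal_ne_top]
  refine lintegral_mono fun t => ?_
  rw [Measure.restrict_apply' measurableSet_Ioo]
  refine le_trans ?_ (Measure.le_restrict_apply _ _)
  set U := {s | t < φ s} ∩ Ioo 0 r
  rcases U.eq_empty_or_nonempty with hU | hU
  · simp [hU]
  have hUσ : U ⊆ Ioc 0 (sSup U) := fun s hs => ⟨hs.2.1, le_csSup ⟨r, fun s hs => hs.2.2.le⟩ hs⟩
  have hσ : sSup U ∈ Ioc 0 r :=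
    ⟨(hUσ hU.some_mem).1.trans_le (hUσ hU.some_mem).2, csSup_le hU fun s hs => hs.2.2.le⟩
  calc ENNReal.ofReal a * volume U ≤ ENNReal.ofReal a * volume (Ioc 0 (sSup U)) := by
        gcongr
    _ = ENNReal.ofReal (a * sSup U) := by
        rw [Real.volume_Ioc, sub_zero, ENNReal.ofReal_mul' hσ.1.le]
    _ ≤ μ {x | 0 < d x ∧ d x < sSup U} := hμ _ hσ
    _ ≤ μ ({x | t < φ (d x)} ∩ {x | 0 < d x ∧ d x < r}) := by
        refine measure_mono fun x ⟨hx0, hxσ⟩ => ?_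
        obtain ⟨s, ⟨hts, hs0, hsr⟩, hxs⟩ := exists_lt_of_lt_csSup hU hxσ
        exact ⟨hts.trans_le (hφa ⟨hx0, hxs.trans hsr⟩ ⟨hs0, hsr⟩ hxs.le), hx0, hxs.trans hsr⟩

theorem mul_setIntegral_Ioo_le_setIntegral_comp (hd : Measurable d) (hφ : Measurable φ)
    (hφa : AntitoneOn φ (Ioo 0 r)) (hφ0 : ∀ s ∈ Ioo 0 r, 0 ≤ φ s) (ha : 0 ≤ a)
    (hμ : ∀ s ∈ Ioc 0 r, ENNReal.ofReal (a * s) ≤ μ {x | 0 < d x ∧ d x < s})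
    (hint : IntegrableOn (fun x => φ (d x)) {x | 0 < d x ∧ d x < r} μ) :
    a * ∫ s in Ioo 0 r, φ s ≤ ∫ x in {x | 0 < d x ∧ d x < r}, φ (d x) ∂μ := by
  have hA : MeasurableSet {x | 0 < d x ∧ d x < r} := hd measurableSet_Ioo
  rw [integral_eq_lintegral_of_nonneg_ae ((ae_restrict_iff' measurableSet_Ioo).2
      (.of_forall hφ0)) hφ.aestronglyMeasurable,
    integral_eq_lintegral_of_nonneg_ae ((ae_restrict_iff' hA).2
      (.of_forall fun x hx => hφ0 _ hx)) (hφ.comp hd).aestronglyMeasurable,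
    ← ENNReal.toReal_ofReal ha, ← ENNReal.toReal_mul]
  exact ENNReal.toReal_mono hint.lintegral_lt_top.ne
    (ofReal_mul_lintegral_Ioo_le_setLIntegral_comp hd hφ hφa hφ0 hμ)

end Comparison

lemma integrableOn_comp_infDist_lt {X : Type*} [MetricSpace X] [ProperSpace X]
    [MeasurableSpace X] [OpensMeasurableSpace X] (μ : Measure X) [IsFiniteMeasureOnCompacts μ]
    {S : Set X} (hS : Bornology.IsBounded S) (hne : S.Nonempty) {φ : ℝ → ℝ}
    (hφ : Continuous φ) (r : ℝ) :
    IntegrableOn (fun x => φ (infDist x S)) {x | infDist x S < r} μ :=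
  ((hφ.comp (continuous_infDist_pt S)).continuousOn.integrableOn_compact
    hS.thickening.isCompact_closure).mono_set
    fun _ hx => subset_closure ((mem_thickening_iff_infDist_lt hne).2 hx)

section Collar

variable {E : Type*} [NormedAddCommGroup E] [NormedSpace ℝ E]

lemma smul_diff_subset_infDist_lt {C : Set E} (hCc : IsClosed C) (h0 : (0 : E) ∈ C)
    {R t s : ℝ} (hCR : C ⊆ closedBall 0 R) (ht : 0 ≤ t) (hts : t * R < s) :
    (1 + t) • C \ C ⊆ {x | 0 < infDist x C ∧ infDist x C < s} := by
  rintro _ ⟨⟨y, hy, rfl⟩, hyC⟩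
  refine ⟨(hCc.notMem_iff_infDist_pos ⟨0, h0⟩).1 hyC, ?_⟩
  have hdist : dist ((1 + t) • y) y = t * ‖y‖ := by
    rw [dist_eq_norm, add_smul, one_smul, add_sub_cancel_left, norm_smul, Real.norm_of_nonneg ht]
  calc infDist ((1 + t) • y) C ≤ t * ‖y‖ := hdist ▸ infDist_le_dist_of_mem hy
    _ ≤ t * R := by gcongr; simpa using hCR hy
    _ < s := hts

variable [FiniteDimensional ℝ E] [MeasurableSpace E] [BorelSpace E] (μ : Measure E)
  [μ.IsAddHaarMeasure] [Nontrivial E]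

lemma ofReal_mul_measure_le_measure_smul_diff {C : Set E} (hC : Convex ℝ C)
    (hCm : MeasurableSet C) (h0 : (0 : E) ∈ C) (hCfin : μ C ≠ ⊤) {t : ℝ} (ht : 0 ≤ t) :
    ENNReal.ofReal t * μ C ≤ μ ((1 + t) • C \ C) := by
  have hsub : C ⊆ (1 + t) • C := fun x hx => (hC.starConvex h0).mem_smul hx (by linarith)
  have hpow : 1 + t ≤ (1 + t) ^ Module.finrank ℝ E := by
    have hdim : (1 : ℝ) ≤ Module.finrank ℝ E := Nat.one_le_cast.2 Module.finrank_pos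
    nlinarith [one_add_mul_le_pow (a := t) (by linarith) (Module.finrank ℝ E)]
  have hsplit : μ ((1 + t) • C \ C) + μ C = μ ((1 + t) • C) := by
    rw [← measure_sdiff_add_inter ((1 + t) • C) hCm, inter_eq_right.2 hsub]
  rw [← ENNReal.add_le_add_iff_right hCfin, hsplit, Measure.addHaar_smul,
    abs_of_nonneg (by linarith)]
  calc ENNReal.ofReal t * μ C + μ C = ENNReal.ofReal (1 + t) * μ C := by
        rw [ENNReal.ofReal_add zero_le_one ht, ENNReal.ofReal_one, add_mul, one_mul, add_comm]
    _ ≤ _ := by gcongr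

lemma ofReal_mul_measure_le_measure_infDist_lt {C : Set E} (hC : Convex ℝ C)
    (hCc : IsClosed C) (h0 : (0 : E) ∈ C) {R t s : ℝ} (hCR : C ⊆ closedBall 0 R)
    (ht : 0 ≤ t) (hts : t * R < s) :
    ENNReal.ofReal t * μ C ≤ μ {x | 0 < infDist x C ∧ infDist x C < s} :=
  (ofReal_mul_measure_le_measure_smul_diff μ hC hCc.measurableSet h0
    ((measure_mono hCR).trans_lt measure_closedBall_lt_top).ne ht).trans
    (measure_mono (smul_diff_subset_infDist_lt hCc h0 hCR ht hts))

lemma exists_pos_ofReal_mul_le_measure_infDist_lt {S : Set E} (hS : Convex ℝ S)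
    (h0 : (0 : E) ∈ interior S) (hSb : Bornology.IsBounded S) :
    ∃ a > 0, ∀ s > 0, ENNReal.ofReal (a * s) ≤ μ {x | 0 < infDist x S ∧ infDist x S < s} := by
  obtain ⟨R, hR, hSR⟩ := hSb.subset_closedBall_lt 0 0
  have hCR : closure S ⊆ closedBall 0 R := closure_minimal hSR isClosed_closedBall
  have hCfin : μ (closure S) ≠ ⊤ := ((measure_mono hCR).trans_lt measure_closedBall_lt_top).ne
  have hCpos : 0 < μ.real (closure S) := ENNReal.toReal_pos
    ((isOpen_interior.measure_pos μ ⟨0, h0⟩).trans_le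
      (measure_mono (interior_subset.trans subset_closure))).ne' hCfin
  refine ⟨μ.real (closure S) / (2 * R), by positivity, fun s hs => ?_⟩
  have h := ofReal_mul_measure_le_measure_infDist_lt μ hS.closure isClosed_closure
    (subset_closure (interior_subset h0)) hCR (t := s / (2 * R)) (by positivity)
    (by field_simp; linarith)
  simp only [infDist_closure] at h
  calc ENNReal.ofReal (μ.real (closure S) / (2 * R) * s)
      = ENNReal.ofReal (s / (2 * R)) * μ (closure S) := by
        rw [← ENNReal.ofReal_toReal hCfin, ← ENNReal.ofReal_mul (by positivity),
          ← measureReal_def]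
        ring_nf
    _ ≤ _ := h

theorem exists_pos_mul_setIntegral_Ioo_le_setIntegral_comp_infDist {S : Set E}
    (hS : Convex ℝ S) (h0 : (0 : E) ∈ interior S) (hSb : Bornology.IsBounded S) :
    ∃ a > 0, ∀ (r : ℝ) (φ : ℝ → ℝ), Continuous φ → AntitoneOn φ (Ioo 0 r) →
      (∀ s ∈ Ioo 0 r, 0 ≤ φ s) →
      a * ∫ s in Ioo 0 r, φ s ≤
        ∫ x in {x | 0 < infDist x S ∧ infDist x S < r}, φ (infDist x S) ∂μ := by
  obtain ⟨a, ha, hcollar⟩ := exists_pos_ofReal_mul_le_measure_infDist_lt μ hS h0 hSb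
  refine ⟨a, ha, fun r φ hφ hφa hφ0 => ?_⟩
  exact mul_setIntegral_Ioo_le_setIntegral_comp (continuous_infDist_pt S).measurable
    hφ.measurable hφa hφ0 ha.le (fun s hs => hcollar s hs.1)
    ((integrableOn_comp_infDist_lt μ hSb ⟨0, interior_subset h0⟩ hφ r).mono_set fun _ hx => hx.2)

end Collar

section Profile

variable {ε p q r : ℝ}

lemma continuous_add_sq_rpow (hε : 0 < ε) (q : ℝ) :
    Continuous fun s : ℝ => (ε + s ^ 2) ^ q :=
  (continuous_const.add (continuous_pow 2)).rpow_const fun s =>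
    .inl (add_pos_of_pos_of_nonneg hε (sq_nonneg s)).ne'

lemma antitoneOn_add_sq_rpow (hε : 0 < ε) (hq : q ≤ 0) :
    AntitoneOn (fun s : ℝ => (ε + s ^ 2) ^ q) (Ici 0) := fun s hs t _ hst =>
  Real.rpow_le_rpow_of_nonpos (by positivity)
    (add_le_add_right (pow_le_pow_left₀ hs hst 2) ε) hq

lemma mul_le_setIntegral_Ioo_of_antitoneOn {φ : ℝ → ℝ} {s₀ : ℝ}
    (hφa : AntitoneOn φ (Ioc 0 r)) (hφi : IntegrableOn φ (Ioo 0 r))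
    (hφ0 : ∀ s ∈ Ioo 0 r, 0 ≤ φ s) (hs₀ : s₀ ∈ Ioc 0 r) :
    s₀ * φ s₀ ≤ ∫ s in Ioo 0 r, φ s := by
  have hsub : Ioo 0 s₀ ⊆ Ioo 0 r := Ioo_subset_Ioo_right hs₀.2
  calc s₀ * φ s₀ = φ s₀ * volume.real (Ioo 0 s₀) := by
        rw [Real.volume_real_Ioo_of_le hs₀.1.le, sub_zero, mul_comm]
    _ ≤ ∫ s in Ioo 0 s₀, φ s :=
        setIntegral_ge_of_const_le_real measurableSet_Ioo (by simp)
          (fun s hs => hφa ⟨hs.1, hs.2.le.trans hs₀.2⟩ hs₀ hs.2.le) (hφi.mono_set hsub)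
    _ ≤ ∫ s in Ioo 0 r, φ s :=
        setIntegral_mono_set hφi ((ae_restrict_iff' measurableSet_Ioo).2 (.of_forall hφ0))
          hsub.eventuallyLE

lemma mul_add_sq_rpow_le_setIntegral_Ioo (hε : 0 < ε) (hq : q ≤ 0) {s₀ : ℝ}
    (hs₀ : s₀ ∈ Ioc 0 r) :
    s₀ * (ε + s₀ ^ 2) ^ q ≤ ∫ s in Ioo 0 r, (ε + s ^ 2) ^ q :=
  mul_le_setIntegral_Ioo_of_antitoneOn ((antitoneOn_add_sq_rpow hε hq).mono fun _ hs => hs.1.le)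
    ((continuous_add_sq_rpow hε q).integrableOn_Icc.mono_set Ioo_subset_Icc_self)
    (fun _ _ => by positivity) hs₀

lemma two_rpow_mul_rpow_le_setIntegral_add_sq_rpow (hp : 1 ≤ p) (hε : 0 < ε) (hεr : √ε ≤ r) :
    2 ^ (1 - p) * ε ^ (3 / 2 - p) ≤ ∫ s in Ioo 0 r, (ε + s ^ 2) ^ (1 - p) := by
  have heq : √ε * (ε + √ε ^ 2) ^ (1 - p) = 2 ^ (1 - p) * ε ^ (3 / 2 - p) := by
    rw [Real.sq_sqrt hε.le, ← two_mul, Real.mul_rpow zero_le_two hε.le, Real.sqrt_eq_rpow,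
      show (3 / 2 - p) = 1 / 2 + (1 - p) by ring, Real.rpow_add hε]
    ring
  rw [← heq]
  exact mul_add_sq_rpow_le_setIntegral_Ioo hε (by linarith) ⟨Real.sqrt_pos.2 hε, hεr⟩

lemma two_rpow_mul_le_setIntegral_add_sq_rpow (hp : 1 ≤ p) (hε : 0 < ε) (hr : 0 < r)
    (hεr : ε + r ^ 2 ≤ 2) :
    2 ^ (1 - p) * r ≤ ∫ s in Ioo 0 r, (ε + s ^ 2) ^ (1 - p) :=
  calc 2 ^ (1 - p) * r ≤ r * (ε + r ^ 2) ^ (1 - p) := by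
        rw [mul_comm]
        exact mul_le_mul_of_nonneg_left
          (Real.rpow_le_rpow_of_nonpos (by positivity) hεr (by linarith)) hr.le
    _ ≤ _ := mul_add_sq_rpow_le_setIntegral_Ioo hε (by linarith) ⟨hr, le_rfl⟩

lemma two_rpow_mul_inv_le_add_sq_rpow (hp : 3 / 2 ≤ p) (hε : 0 ≤ ε) {s : ℝ} (hs : 0 < s)
    (hs1 : s ≤ 1) (hεs : ε ≤ s ^ 2) :
    2 ^ (1 - p) * s⁻¹ ≤ (ε + s ^ 2) ^ (1 - p) := by
  have h2 : (0 : ℝ) < 2 ^ (1 - p) := by positivity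
  calc 2 ^ (1 - p) * s⁻¹ = 2 ^ (1 - p) * s ^ (-1 : ℝ) := by rw [Real.rpow_neg_one]
    _ ≤ 2 ^ (1 - p) * s ^ (2 * (1 - p)) :=
        mul_le_mul_of_nonneg_left (Real.rpow_le_rpow_of_exponent_ge hs hs1 (by linarith)) h2.le
    _ = (2 * s ^ 2) ^ (1 - p) := by
        rw [Real.mul_rpow zero_le_two (by positivity), Real.rpow_mul hs.le]
        norm_cast
    _ ≤ (ε + s ^ 2) ^ (1 - p) :=
        Real.rpow_le_rpow_of_nonpos (by positivity) (by linarith) (by linarith)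

lemma two_rpow_mul_log_le_setIntegral_add_sq_rpow (hp : 3 / 2 ≤ p) (hε : 0 < ε)
    (hεr : √ε ≤ r) (hr : r ≤ 1) :
    2 ^ (1 - p) * Real.log (r / √ε) ≤ ∫ s in Ioo 0 r, (ε + s ^ 2) ^ (1 - p) := by
  have hsq : 0 < √ε := Real.sqrt_pos.2 hε
  have hinv : IntegrableOn (fun s : ℝ => 2 ^ (1 - p) * s⁻¹) (Ioo √ε r) :=
    (continuousOn_const.mul (continuousOn_inv₀.mono fun s hs => (hsq.trans_le hs.1).ne'))
      |>.integrableOn_Icc.mono_set Ioo_subset_Icc_self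
  have hprof : IntegrableOn (fun s : ℝ => (ε + s ^ 2) ^ (1 - p)) (Ioo 0 r) :=
    (continuous_add_sq_rpow hε _).integrableOn_Icc.mono_set Ioo_subset_Icc_self
  calc 2 ^ (1 - p) * Real.log (r / √ε) = ∫ s in Ioo √ε r, 2 ^ (1 - p) * s⁻¹ := by
        rw [← integral_inv_of_pos hsq (hsq.trans_le hεr), ← intervalIntegral.integral_const_mul,
          intervalIntegral.integral_of_le hεr, integral_Ioc_eq_integral_Ioo]
    _ ≤ ∫ s in Ioo √ε r, (ε + s ^ 2) ^ (1 - p) :=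
        setIntegral_mono_on hinv (hprof.mono_set (Ioo_subset_Ioo_left hsq.le)) measurableSet_Ioo
          fun s hs => two_rpow_mul_inv_le_add_sq_rpow hp hε.le (hsq.trans hs.1) (hs.2.le.trans hr)
            ((Real.sqrt_lt' (hsq.trans hs.1)).1 hs.1).le
    _ ≤ ∫ s in Ioo 0 r, (ε + s ^ 2) ^ (1 - p) :=
        setIntegral_mono_set hprof (.of_forall fun _ => by positivity)
          (Ioo_subset_Ioo_left hsq.le).eventuallyLE

lemma abs_log_le_four_mul_log_div_sqrt (hε : 0 < ε) (hε1 : ε < 1) (hεr : ε ≤ r ^ 4) :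
    |Real.log ε| ≤ 4 * Real.log (r / √ε) := by
  have hr : r ≠ 0 := by rintro rfl; norm_num at hεr; linarith
  have h4 := Real.log_le_log hε hεr
  rw [Real.log_pow] at h4
  rw [abs_of_neg (Real.log_neg hε hε1), Real.log_div hr (Real.sqrt_pos.2 hε).ne',
    Real.log_sqrt hε.le]
  push_cast at h4
  linarith

end Profile

theorem collar_integral_lower_bound_general
    {n : ℕ} (hn : 2 ≤ n) (p r0 R0 r : ℝ) (hp : 1 < p)
    (hr0 : 0 < r0) (hr : r ∈ Ioo (0:ℝ) 1)
    (S : Set (EuclideanSpace ℝ (Fin (n-1)))) (hconv : Convex ℝ S)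
    (hball : ball (0 : EuclideanSpace ℝ (Fin (n-1))) r0 ⊆ S)
    (hball' : S ⊆ ball (0 : EuclideanSpace ℝ (Fin (n-1))) R0) :
    ∃ c > (0:ℝ), ∃ ε0 ∈ Ioo (0:ℝ) 1, ∀ ε ∈ Ioo (0:ℝ) ε0,
      ((((n:ℝ) + 1) / 2 < p →
        c * ε ^ (((n:ℝ) + 1) / 2 - p) ≤
          ∫ x' in {x' : EuclideanSpace ℝ (Fin (n-1)) |
              0 < infDist x' S ∧ infDist x' S < r},
            (ε + (infDist x' S) ^ 2) ^ (1 - p)) ∧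
      (p = ((n:ℝ) + 1) / 2 →
        c * |Real.log ε| ≤
          ∫ x' in {x' : EuclideanSpace ℝ (Fin (n-1)) |
              0 < infDist x' S ∧ infDist x' S < r},
            (ε + (infDist x' S) ^ 2) ^ (1 - p)) ∧
      (p < ((n:ℝ) + 1) / 2 →
        c ≤ ∫ x' in {x' : EuclideanSpace ℝ (Fin (n-1)) |
              0 < infDist x' S ∧ infDist x' S < r},
            (ε + (infDist x' S) ^ 2) ^ (1 - p))) := by
  obtain ⟨hr₀, hr₁⟩ := hr
  have hn' : (2 : ℝ) ≤ n := by exact_mod_cast hn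
  have : Nontrivial (EuclideanSpace ℝ (Fin (n-1))) :=
    Module.nontrivial_of_finrank_pos (R := ℝ) (by rw [finrank_euclideanSpace_fin]; omega)
  obtain ⟨a, ha, hcompare⟩ := exists_pos_mul_setIntegral_Ioo_le_setIntegral_comp_infDist volume
    hconv (interior_maximal hball isOpen_ball (mem_ball_self hr0)) (isBounded_ball.subset hball')
  have hc : 0 ≤ a * 2 ^ (1 - p) := by positivity
  have hr4 : r ^ 4 < 1 := pow_lt_one₀ hr₀.le hr₁ four_ne_zero
  refine ⟨a * 2 ^ (1 - p) * r / 4, by positivity, r ^ 4, ⟨by positivity, hr4⟩, ?_⟩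
  rintro ε ⟨hε, hεr⟩
  have hsqrt : √ε ≤ r := Real.sqrt_le_iff.2
    ⟨hr₀.le, by nlinarith [pow_le_pow_of_le_one hr₀.le hr₁.le (by norm_num : 2 ≤ 4)]⟩
  have hJ := hcompare r _ (continuous_add_sq_rpow hε (1 - p))
    ((antitoneOn_add_sq_rpow hε (by linarith)).mono fun _ hs => hs.1.le) fun _ _ => by positivity
  refine ⟨fun hpn => le_trans ?_ hJ, fun hpn => le_trans ?_ hJ, fun _ => le_trans ?_ hJ⟩
  · calc _ ≤ a * (2 ^ (1 - p) * ε ^ (3 / 2 - p)) := by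
          rw [← mul_assoc]
          exact mul_le_mul (by nlinarith) (Real.rpow_le_rpow_of_exponent_ge hε
            (hεr.trans hr4).le (by linarith)) (by positivity) hc
      _ ≤ _ := mul_le_mul_of_nonneg_left
          (two_rpow_mul_rpow_le_setIntegral_add_sq_rpow hp.le hε hsqrt) ha.le
  · have hlog := abs_log_le_four_mul_log_div_sqrt hε (hεr.trans hr4) hεr.le
    calc _ ≤ a * (2 ^ (1 - p) * Real.log (r / √ε)) := by
          nlinarith [mul_le_mul_of_nonneg_left hlog hc,
            mul_le_mul_of_nonneg_left hr₁.le (mul_nonneg hc (abs_nonneg (Real.log ε)))]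
      _ ≤ _ := mul_le_mul_of_nonneg_left
          (two_rpow_mul_log_le_setIntegral_add_sq_rpow (by linarith) hε hsqrt hr₁.le) ha.le
  · calc _ ≤ a * (2 ^ (1 - p) * r) := by nlinarith [mul_pos ha hr₀]
      _ ≤ _ := mul_le_mul_of_nonneg_left
          (two_rpow_mul_le_setIntegral_add_sq_rpow hp.le hε hr₀ (by nlinarith)) ha.le

/-- Equation (3.12): three-regime lower bound on the collar integral outside
the flat part `Σ'` of the inclusions. -/
theorem collar_integral_lower_bound
    {n : ℕ} (hn : 2 ≤ n) (p r0 R0 r : ℝ) (hp : 1 < p)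
    (hr0 : 0 < r0) (hr0R0 : r0 ≤ R0) (hr : r ∈ Ioo (0:ℝ) 1)
    (S : Set (EuclideanSpace ℝ (Fin (n-1)))) (hconv : Convex ℝ S)
    (hball : ball (0 : EuclideanSpace ℝ (Fin (n-1))) r0 ⊆ S)
    (hball' : S ⊆ ball (0 : EuclideanSpace ℝ (Fin (n-1))) R0) :
    ∃ c > (0:ℝ), ∃ ε0 ∈ Ioo (0:ℝ) 1, ∀ ε ∈ Ioo (0:ℝ) ε0,
      ((((n:ℝ) + 1) / 2 < p →
        c * ε ^ (((n:ℝ) + 1) / 2 - p) ≤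
          ∫ x' in {x' : EuclideanSpace ℝ (Fin (n-1)) |
              0 < infDist x' S ∧ infDist x' S < r},
            (ε + (infDist x' S) ^ 2) ^ (1 - p)) ∧
      (p = ((n:ℝ) + 1) / 2 →
        c * |Real.log ε| ≤
          ∫ x' in {x' : EuclideanSpace ℝ (Fin (n-1)) |
              0 < infDist x' S ∧ infDist x' S < r},
            (ε + (infDist x' S) ^ 2) ^ (1 - p)) ∧
      (p < ((n:ℝ) + 1) / 2 →
        c ≤ ∫ x' in {x' : EuclideanSpace ℝ (Fin (n-1)) |
              0 < infDist x' S ∧ infDist x' S < r},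
            (ε + (infDist x' S) ^ 2) ^ (1 - p))) :=
  collar_integral_lower_bound_general hn p r0 R0 r hp hr0 hr S hconv hball hball'
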